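/- Let B_{k,ℓ} denote the number of up-down words of length ℓ over {1,…,k} avoiding the consecutive pattern 312, with the conventions B_{k,0} = 1 and B_{k,1} = k − 1. Then for all k ≥ 2 and i ≥ 1, B_{k,2i+1} = B_{k−1,2i+1} + (k−1)·B_{k,2i−1}, with B_{1,2i+1} = 0 for i ≥ 1. -/
import Mathlib


/-- `w` is an up-down word: `w₀ < w₁ > w₂ < w₃ > ⋯` (0-indexed). -/
def IsUpDown {l k : ℕ} (w : Fin l → Fin k) : Prop :=
  ∀ j : ℕ, ∀ h : j + 1 < l,
    (j % 2 = 0 → w ⟨j, by omega⟩ < w ⟨j + 1, h⟩) ∧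
    (j % 2 = 1 → w ⟨j + 1, h⟩ < w ⟨j, by omega⟩)

/-- `w` avoids the consecutive pattern 312. -/
def AvoidsC312 {l k : ℕ} (w : Fin l → Fin k) : Prop :=
  ∀ j : ℕ, ∀ h : j + 2 < l,
    ¬ (w ⟨j + 1, by omega⟩ < w ⟨j + 2, h⟩ ∧ w ⟨j + 2, h⟩ < w ⟨j, by omega⟩)

/-- The number of up-down words of length `l` over `{1,…,k}` avoiding the
consecutive pattern 312. -/
noncomputable def Bcount (k l : ℕ) : ℕ :=
  {w : Fin l → Fin k | IsUpDown w ∧ AvoidsC312 w}.ncard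

/-- `B_{k,ℓ}` with the conventions `B_{k,0} = 1` and `B_{k,1} = k − 1`. -/
noncomputable def B (k l : ℕ) : ℕ :=
  if l = 0 then 1 else if l = 1 then k - 1 else Bcount k l

lemma valid_congr_val {l k k' : ℕ} {w : Fin l → Fin k} {w' : Fin l → Fin k'}
    (h : ∀ j, (w j : ℕ) = (w' j : ℕ)) (hw : IsUpDown w ∧ AvoidsC312 w) :
    IsUpDown w' ∧ AvoidsC312 w' := by
  refine ⟨fun j hj => ?_, fun j hj => ?_⟩
  · have := hw.1 j hj
    simp only [Fin.lt_def, ← h] at *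
    exact this
  · have := hw.2 j hj
    simp only [Fin.lt_def, ← h] at *
    exact this

lemma valid_restrict {l l' k : ℕ} (hl : l' ≤ l) {w : Fin l → Fin k}
    (hw : IsUpDown w ∧ AvoidsC312 w) :
    IsUpDown (w ∘ Fin.castLE hl) ∧ AvoidsC312 (w ∘ Fin.castLE hl) := by
  refine ⟨fun j hj => ?_, fun j hj => ?_⟩
  · exact hw.1 j (by omega)
  · exact hw.2 j (by omega)

-- peaks step
lemma peak_step {l k : ℕ} {w : Fin l → Fin k} (hw : IsUpDown w ∧ AvoidsC312 w)
    {j : ℕ} (hj : j % 2 = 1) (h : j + 2 < l) :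
    w ⟨j, by omega⟩ ≤ w ⟨j + 2, h⟩ := by
  by_contra hlt
  push_neg at hlt
  have h1 : w ⟨j + 1, by omega⟩ < w ⟨j + 1 + 1, by omega⟩ :=
    (hw.1 (j + 1) (by omega)).1 (by omega)
  have e : (⟨j + 1 + 1, by omega⟩ : Fin l) = ⟨j + 2, h⟩ := Fin.mk_eq_mk.mpr (by omega)
  rw [e] at h1
  exact hw.2 j h ⟨h1, hlt⟩

lemma peak_chain {l k : ℕ} {w : Fin l → Fin k} (hw : IsUpDown w ∧ AvoidsC312 w) :
    ∀ (d j : ℕ), j % 2 = 1 → ∀ (h : j + 2 * d < l),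
      w ⟨j, by omega⟩ ≤ w ⟨j + 2 * d, h⟩ := by
  intro d
  induction d with
  | zero => intro j hj h; exact le_of_eq (congrArg w (Fin.mk_eq_mk.mpr (by omega)))
  | succ d ih =>
    intro j hj h
    have h2 : j + 2 < l := by omega
    refine le_trans (peak_step hw hj h2) ?_
    have := ih (j + 2) (by omega) (by omega)
    exact le_trans this (le_of_eq (congrArg w (Fin.mk_eq_mk.mpr (by omega))))

lemma peak_le_top {n k : ℕ} {w : Fin (2*n+3) → Fin k} (hw : IsUpDown w ∧ AvoidsC312 w)
    (t : ℕ) (ht : t % 2 = 1) (htl : t ≤ 2*n+1) :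
    (w ⟨t, by omega⟩ : ℕ) ≤ (w ⟨2*n+1, by omega⟩ : ℕ) := by
  have h := peak_chain hw ((2*n+1-t)/2) t ht (by omega)
  have e : (⟨t + 2 * ((2*n+1-t)/2), by omega⟩ : Fin (2*n+3)) = ⟨2*n+1, by omega⟩ :=
    Fin.mk_eq_mk.mpr (by omega)
  rw [e] at h
  exact h

lemma all_le_top {n k : ℕ} {w : Fin (2*n+3) → Fin k} (hw : IsUpDown w ∧ AvoidsC312 w)
    (j : Fin (2*n+3)) : (w j : ℕ) ≤ (w ⟨2*n+1, by omega⟩ : ℕ) := by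
  have hjw : w j = w ⟨j.val, j.isLt⟩ := congrArg w (Fin.ext rfl)
  rw [hjw]
  rcases Nat.lt_or_ge j.val (2*n+2) with hj | hj
  · rcases Nat.even_or_odd j.val with he | ho
    · -- even, j.val ≤ 2n
      have hje : j.val % 2 = 0 := Nat.even_iff.mp he
      have hup := (hw.1 j.val (by omega)).1 hje
      have := peak_le_top hw (j.val + 1) (by omega) (by omega)
      rw [Fin.lt_def] at hup
      omega
    · have hjo : j.val % 2 = 1 := Nat.odd_iff.mp ho
      exact peak_le_top hw j.val hjo (by omega)
  · -- j.val = 2n+2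
    have hje : j.val = 2*n+2 := by omega
    have hdn := (hw.1 (2*n+1) (by omega)).2 (by omega)
    rw [Fin.lt_def] at hdn
    have e : (⟨j.val, j.isLt⟩ : Fin (2*n+3)) = ⟨2*n+1+1, by omega⟩ := Fin.mk_eq_mk.mpr (by omega)
    rw [e]
    omega

lemma Bcount_eq (k l : ℕ) :
    Bcount k l = Nat.card {w : Fin l → Fin k // IsUpDown w ∧ AvoidsC312 w} := by
  rw [Bcount, ← Nat.card_coe_set_eq]
  rfl

noncomputable def Tcard (m n : ℕ) : ℕ :=
  Nat.card {w : Fin (2*n+1) → Fin (m+1) //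
    (IsUpDown w ∧ AvoidsC312 w) ∧ (w ⟨2*n, by omega⟩ : ℕ) < m}

lemma Tcard_zero (m : ℕ) : Tcard m 0 = m := by
  rw [Tcard]
  have e : {w : Fin (2*0+1) → Fin (m+1) //
      (IsUpDown w ∧ AvoidsC312 w) ∧ (w ⟨2*0, by omega⟩ : ℕ) < m} ≃ Fin m :=
    { toFun := fun x => ⟨(x.1 ⟨0, by omega⟩ : ℕ), x.2.2⟩
      invFun := fun v => ⟨fun _ => ⟨v.val, by omega⟩,
        ⟨⟨fun j h => absurd h (by omega), fun j h => absurd h (by omega)⟩, v.isLt⟩⟩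
      left_inv := fun x => Subtype.ext (funext fun j => Fin.ext (by
        have hj : j = ⟨0, by omega⟩ := Fin.ext (by omega)
        rw [hj]))
      right_inv := fun v => rfl }
  rw [Nat.card_congr e, Nat.card_eq_fintype_card, Fintype.card_fin]

lemma Tcard_succ (m n : ℕ) : Tcard m (n+1) = Bcount (m+1) (2*(n+1)+1) := by
  rw [Tcard, Bcount_eq]
  refine Nat.card_congr (Equiv.subtypeEquivRight fun w => ⟨And.left, fun hP => ⟨hP, ?_⟩⟩)
  have h1 := (hP.1 (2*n+1) (by omega)).2 (by omega)
  rw [Fin.lt_def] at h1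
  have e : (⟨2*(n+1), by omega⟩ : Fin (2*(n+1)+1)) = ⟨2*n+1+1, by omega⟩ :=
    Fin.mk_eq_mk.mpr (by omega)
  rw [e]
  have := (w ⟨2*n+1, by omega⟩).isLt
  omega

lemma B_eq_Tcard (m n : ℕ) : B (m+1) (2*n+1) = Tcard m n := by
  cases n with
  | zero => simp [B, Tcard_zero]
  | succ n =>
    rw [B, if_neg (by omega), if_neg (by omega), ← Tcard_succ]

lemma cardA (m n : ℕ) :
    Nat.card {w : Fin (2*n+3) → Fin (m+1) //
      (IsUpDown w ∧ AvoidsC312 w) ∧ (w ⟨2*n+1, by omega⟩ : ℕ) < m}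
    = Bcount m (2*n+3) := by
  rw [Bcount_eq]
  refine Nat.card_congr
    { toFun := fun x => ⟨fun j => ⟨(x.1 j : ℕ),
        lt_of_le_of_lt (all_le_top x.2.1 j) x.2.2⟩,
        valid_congr_val (fun j => rfl) x.2.1⟩
      invFun := fun x => ⟨fun j => Fin.castLE (by omega) (x.1 j),
        ⟨valid_congr_val (fun j => rfl) x.2, (x.1 ⟨2*n+1, by omega⟩).isLt⟩⟩
      left_inv := fun x => Subtype.ext (funext fun j => Fin.ext rfl)
      right_inv := fun x => Subtype.ext (funext fun j => Fin.ext rfl) }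
def extw (m n : ℕ) (w' : Fin (2*n+1) → Fin (m+1)) (v : Fin m) : Fin (2*n+3) → Fin (m+1) :=
  fun j => if h : (j : ℕ) < 2*n+1 then w' ⟨j, h⟩
    else if (j : ℕ) = 2*n+1 then ⟨m, by omega⟩ else ⟨v.val, by omega⟩

lemma extw_app₁ (m n : ℕ) (w' : Fin (2*n+1) → Fin (m+1)) (v : Fin m) (j : ℕ)
    (h : j < 2*n+1) (h' : j < 2*n+3) : extw m n w' v ⟨j, h'⟩ = w' ⟨j, h⟩ := dif_pos h

lemma extw_app₂ (m n : ℕ) (w' : Fin (2*n+1) → Fin (m+1)) (v : Fin m)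
    (h' : 2*n+1 < 2*n+3) : extw m n w' v ⟨2*n+1, h'⟩ = ⟨m, by omega⟩ :=
  (dif_neg (show ¬(2*n+1 < 2*n+1) by omega)).trans (if_pos rfl)

lemma extw_app₃ (m n : ℕ) (w' : Fin (2*n+1) → Fin (m+1)) (v : Fin m)
    (h' : 2*n+2 < 2*n+3) : extw m n w' v ⟨2*n+2, h'⟩ = ⟨v.val, by omega⟩ :=
  (dif_neg (show ¬(2*n+2 < 2*n+1) by omega)).trans (if_neg (show ¬(2*n+2 = 2*n+1) by omega))
lemma extw_valid (m n : ℕ) (w' : Fin (2*n+1) → Fin (m+1)) (v : Fin m)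
    (h1 : IsUpDown w' ∧ AvoidsC312 w') (h2 : (w' ⟨2*n, by omega⟩ : ℕ) < m) :
    (IsUpDown (extw m n w' v) ∧ AvoidsC312 (extw m n w' v)) ∧
      (extw m n w' v ⟨2*n+1, by omega⟩ : ℕ) = m := by
  have key : ∀ (j : ℕ) (h' : j < 2*n+3),
      (extw m n w' v ⟨j, h'⟩ : ℕ) =
        if h : j < 2*n+1 then (w' ⟨j, h⟩ : ℕ) else if j = 2*n+1 then m else v.val := by
    intro j h'
    by_cases h : j < 2*n+1
    · rw [extw_app₁ m n w' v j h h', dif_pos h]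
    · by_cases hb : j = 2*n+1
      · subst hb
        rw [extw_app₂, dif_neg h, if_pos rfl]
      · have hcc : j = 2*n+2 := by omega
        subst hcc
        rw [extw_app₃, dif_neg h, if_neg hb]
  have hav : ∀ (a : ℕ) (ha : a + 2 < 2*n+1),
      ¬ ((w' ⟨a+1, by omega⟩ : ℕ) < (w' ⟨a+2, ha⟩ : ℕ) ∧
         (w' ⟨a+2, ha⟩ : ℕ) < (w' ⟨a, by omega⟩ : ℕ)) := by
    intro a ha hcc
    exact h1.2 a ha ⟨hcc.1, hcc.2⟩
  refine ⟨⟨fun j hj => ⟨fun hje => ?_, fun hjo => ?_⟩, fun j hj => fun hcon => ?_⟩, ?_⟩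
  · rw [Fin.lt_def, key j (by omega), key (j+1) (by omega)]
    split_ifs
    all_goals try omega
    all_goals try (exact (h1.1 j ‹j + 1 < 2*n+1›).1 hje)
    all_goals try (rw [show w' ⟨j, ‹j < 2*n+1›⟩ = w' ⟨2*n, by omega⟩ from
      congrArg w' (Fin.mk_eq_mk.mpr (by omega))]; exact h2)
  · rw [Fin.lt_def, key j (by omega), key (j+1) (by omega)]
    split_ifs
    all_goals try omega
    all_goals try (exact (h1.1 j ‹j + 1 < 2*n+1›).2 hjo)
    all_goals try (exact v.isLt)
  · rw [Fin.lt_def, Fin.lt_def, key j (by omega), key (j+1) (by omega), key (j+2) (by omega)] at hcon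
    split_ifs at hcon
    all_goals try omega
    all_goals try (exact hav j ‹j + 2 < 2*n+1› ⟨hcon.1, hcon.2⟩)
    all_goals try (have := (w' ⟨j, ‹j < 2*n+1›⟩).isLt; omega)
    all_goals try (have := (w' ⟨j+1, ‹j + 1 < 2*n+1›⟩).isLt; omega)
    all_goals try (have := (w' ⟨j+2, ‹j + 2 < 2*n+1›⟩).isLt; omega)
  · rw [extw_app₂]

def fwd (m n : ℕ)
    (x : {w : Fin (2*n+3) → Fin (m+1) //
      (IsUpDown w ∧ AvoidsC312 w) ∧ (w ⟨2*n+1, by omega⟩ : ℕ) = m}) :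
    {w' : Fin (2*n+1) → Fin (m+1) //
      (IsUpDown w' ∧ AvoidsC312 w') ∧ (w' ⟨2*n, by omega⟩ : ℕ) < m} × Fin m :=
  (⟨x.1 ∘ Fin.castLE (by omega), ⟨valid_restrict (by omega) x.2.1, by
      have hup := (x.2.1.1 (2*n) (by omega)).1 (by omega)
      rw [Fin.lt_def] at hup
      have he := x.2.2
      show (x.1 ⟨2*n, by omega⟩ : ℕ) < m
      omega⟩⟩,
    ⟨(x.1 ⟨2*n+2, by omega⟩ : ℕ), by
      have hdn := (x.2.1.1 (2*n+1) (by omega)).2 (by omega)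
      rw [Fin.lt_def] at hdn
      have he := x.2.2
      have e : x.1 ⟨2*n+1+1, by omega⟩ = x.1 ⟨2*n+2, by omega⟩ :=
        congrArg x.1 (Fin.mk_eq_mk.mpr (by omega))
      rw [e] at hdn
      omega⟩)

def bwd (m n : ℕ)
    (y : {w' : Fin (2*n+1) → Fin (m+1) //
      (IsUpDown w' ∧ AvoidsC312 w') ∧ (w' ⟨2*n, by omega⟩ : ℕ) < m} × Fin m) :
    {w : Fin (2*n+3) → Fin (m+1) //
      (IsUpDown w ∧ AvoidsC312 w) ∧ (w ⟨2*n+1, by omega⟩ : ℕ) = m} :=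
  ⟨extw m n y.1.1 y.2, extw_valid m n y.1.1 y.2 y.1.2.1 y.1.2.2⟩

lemma fwd_bwd (m n : ℕ) (y : {w' : Fin (2*n+1) → Fin (m+1) //
      (IsUpDown w' ∧ AvoidsC312 w') ∧ (w' ⟨2*n, by omega⟩ : ℕ) < m} × Fin m) :
    fwd m n (bwd m n y) = y := by
  refine Prod.ext ?_ ?_
  · refine Subtype.ext (funext fun j => ?_)
    rcases j with ⟨jv, hjv⟩
    show extw m n y.1.1 y.2 ⟨jv, by omega⟩ = y.1.1 ⟨jv, hjv⟩
    exact extw_app₁ m n y.1.1 y.2 jv hjv (by omega)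
  · refine Fin.ext ?_
    show (extw m n y.1.1 y.2 ⟨2*n+2, by omega⟩ : ℕ) = (y.2 : ℕ)
    exact congrArg Fin.val (extw_app₃ m n y.1.1 y.2 (by omega))

lemma bwd_fwd (m n : ℕ) (x : {w : Fin (2*n+3) → Fin (m+1) //
      (IsUpDown w ∧ AvoidsC312 w) ∧ (w ⟨2*n+1, by omega⟩ : ℕ) = m}) :
    bwd m n (fwd m n x) = x := by
  refine Subtype.ext (funext fun j => ?_)
  rcases j with ⟨jv, hjv⟩
  show extw m n (fwd m n x).1.1 (fwd m n x).2 ⟨jv, hjv⟩ = x.1 ⟨jv, hjv⟩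
  by_cases h : jv < 2*n+1
  · exact extw_app₁ m n _ _ jv h hjv
  · by_cases h2 : jv = 2*n+1
    · subst h2
      exact (extw_app₂ m n _ _ hjv).trans (Fin.ext x.2.2.symm)
    · have h3 : jv = 2*n+2 := by omega
      subst h3
      exact (extw_app₃ m n _ _ hjv).trans (Fin.ext rfl)

lemma cardB (m n : ℕ) :
    Nat.card {w : Fin (2*n+3) → Fin (m+1) //
      (IsUpDown w ∧ AvoidsC312 w) ∧ (w ⟨2*n+1, by omega⟩ : ℕ) = m}
    = Tcard m n * m := by
  have hm : Tcard m n * m = Nat.card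
      ({w' : Fin (2*n+1) → Fin (m+1) //
        (IsUpDown w' ∧ AvoidsC312 w') ∧ (w' ⟨2*n, by omega⟩ : ℕ) < m} × Fin m) := by
    rw [Nat.card_prod, Tcard, Nat.card_eq_fintype_card (α := Fin m), Fintype.card_fin]
  rw [hm]
  exact Nat.card_congr ⟨fwd m n, bwd m n, bwd_fwd m n, fwd_bwd m n⟩

lemma card_split {α : Type*} [Finite α] (P Q : α → Prop) :
    Nat.card {x // P x} = Nat.card {x // P x ∧ Q x} + Nat.card {x // P x ∧ ¬ Q x} := by
  classical
  have e : {x // P x} ≃ {x // P x ∧ Q x} ⊕ {x // P x ∧ ¬ Q x} :=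
    (Equiv.sumCompl (fun y : {x // P x} => Q y.1)).symm.trans
      (Equiv.sumCongr (Equiv.subtypeSubtypeEquivSubtypeInter P Q)
        (Equiv.subtypeSubtypeEquivSubtypeInter P (fun a => ¬ Q a)))
  rw [Nat.card_congr e, Nat.card_sum]

lemma mainrec (m n : ℕ) :
    Bcount (m+1) (2*n+3) = Bcount m (2*n+3) + Tcard m n * m := by
  rw [Bcount_eq (m+1) (2*n+3),
    card_split (fun w : Fin (2*n+3) → Fin (m+1) => IsUpDown w ∧ AvoidsC312 w)
      (fun w => (w ⟨2*n+1, by omega⟩ : ℕ) < m)]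
  rw [cardA m n]
  congr 1
  rw [← cardB m n]
  refine Nat.card_congr (Equiv.subtypeEquivRight fun w => ?_)
  have := (w ⟨2*n+1, by omega⟩).isLt
  constructor
  · rintro ⟨hP, hlt⟩
    exact ⟨hP, by omega⟩
  · rintro ⟨hP, heq⟩
    exact ⟨hP, by omega⟩

lemma Bcount_one_eq_zero (l : ℕ) (hl : 2 ≤ l) : Bcount 1 l = 0 := by
  have : {w : Fin l → Fin 1 | IsUpDown w ∧ AvoidsC312 w} = ∅ := by
    ext w
    simp only [Set.mem_setOf_eq, Set.mem_empty_iff_false, iff_false]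
    rintro ⟨h1, -⟩
    have h := (h1 0 (by omega)).1 rfl
    rw [Fin.lt_def] at h
    omega
  rw [Bcount, this, Set.ncard_empty]

/-- Recurrence `B_{k,2i+1} = B_{k−1,2i+1} + (k−1)·B_{k,2i−1}` for `k ≥ 2`,
`i ≥ 1`, with `B_{1,2i+1} = 0` for `i ≥ 1`. -/
theorem stmt_6 :
    (∀ k i : ℕ, 2 ≤ k → 1 ≤ i →
      B k (2 * i + 1) = B (k - 1) (2 * i + 1) + (k - 1) * B k (2 * i - 1)) ∧
    (∀ i : ℕ, 1 ≤ i → B 1 (2 * i + 1) = 0) := by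
  constructor
  · intro k i hk hi
    obtain ⟨m, rfl⟩ : ∃ m, k = m + 1 + 1 := ⟨k - 2, by omega⟩
    obtain ⟨n, rfl⟩ : ∃ n, i = n + 1 := ⟨i - 1, by omega⟩
    rw [show 2*(n+1)+1 = 2*n+3 by omega, show 2*(n+1)-1 = 2*n+1 by omega,
      show m+1+1-1 = m+1 by omega]
    have e1 : B (m+1+1) (2*n+3) = Bcount (m+1+1) (2*n+3) := by
      simp only [B]
      rw [if_neg (by omega), if_neg (by omega)]
    have e2 : B (m+1) (2*n+3) = Bcount (m+1) (2*n+3) := by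
      simp only [B]
      rw [if_neg (by omega), if_neg (by omega)]
    rw [e1, e2, B_eq_Tcard (m+1) n, mainrec (m+1) n]
    ring
  · intro i hi
    obtain ⟨n, rfl⟩ : ∃ n, i = n + 1 := ⟨i - 1, by omega⟩
    simp only [B]
    rw [if_neg (by omega), if_neg (by omega), Bcount_one_eq_zero _ (by omega)]
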